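/- (Chi-squared Bayes factor.) For every k > 0, τ > 0, r ≥ 1 and h > 0: ∫_0^∞ p_k(h|λ) · γ(λ; k/2+r, 1/(2τ²)) dλ = g_k(h) · (1+τ²)^{−(k/2+r)} · ₁F₁(k/2+r, k/2; τ²h/(2(1+τ²))). Equivalently, the chi-squared Bayes factor BF₁₀(h|τ²,r) = (∫_0^∞ p_k(h|λ) γ(λ; k/2+r, 1/(2τ²)) dλ)/g_k(h) equals (1+τ²)^{−(k/2+r)} ₁F₁(k/2+r, k/2; τ²h/(2(1+τ²))). -/

import Mathlib

/-!
The noncentral density is the Poisson(`λ/2`) mixture of the central densities `g_{k+2i}`, and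
`g_{k+2i}(h) = g_k(h) (h/2)^i / (k/2)_i`. Integrating the Poisson weights against the Gamma prior
of shape `α = k/2 + r` gives negative binomial weights `(α)_i / i! · p^α (1-p)^i` with
`p = 1/(1+τ²)`, so the marginal density is `g_k(h) p^α` times the ₁F₁ series at `(1-p) h / 2`.
All terms are nonnegative and that series converges, which justifies integrating term by term.
-/

open Real MeasureTheory Filter

/-- Rising factorial (Pochhammer symbol) `(a)_k`. -/
noncomputable def risingFac (a : ℝ) (k : ℕ) : ℝ := (ascPochhammer ℝ k).eval a

/-- Confluent hypergeometric function `₁F₁(a, b; x)`. -/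
noncomputable def oneF1 (a b x : ℝ) : ℝ :=
  ∑' k : ℕ, (risingFac a k / risingFac b k) * x ^ k / (Nat.factorial k : ℝ)

/-- Central chi-square density with `ν` degrees of freedom. -/
noncomputable def chiSqPdf (ν h : ℝ) : ℝ :=
  h ^ (ν / 2 - 1) * Real.exp (-h / 2) / ((2 : ℝ) ^ (ν / 2) * Real.Gamma (ν / 2))

/-- Noncentral chi-square density with `k` degrees of freedom and noncentrality `lam`. -/
noncomputable def ncChiSqPdf (k lam h : ℝ) : ℝ :=
  ∑' i : ℕ, Real.exp (-lam / 2) * (lam / 2) ^ i / (Nat.factorial i : ℝ) *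
    chiSqPdf (k + 2 * i) h

/-- Gamma density with shape `α` and rate `b`. -/
noncomputable def gammaPdf (α b lam : ℝ) : ℝ :=
  b ^ α * lam ^ (α - 1) * Real.exp (-b * lam) / Real.Gamma α

open Set

lemma risingFac_succ (a : ℝ) (n : ℕ) : risingFac a (n + 1) = risingFac a n * (a + n) :=
  ascPochhammer_succ_eval n a

lemma risingFac_pos {a : ℝ} (ha : 0 < a) (n : ℕ) : 0 < risingFac a n :=
  ascPochhammer_pos n a ha

lemma Gamma_add_nat_eq_risingFac_mul {s : ℝ} (hs : 0 < s) (n : ℕ) :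
    Gamma (s + n) = risingFac s n * Gamma s := by
  induction n with
  | zero => simp [risingFac]
  | succ n ih =>
    rw [Nat.cast_succ, ← add_assoc, Gamma_add_one (by positivity), ih, risingFac_succ]
    ring

noncomputable def oneF1Term (a b x : ℝ) (i : ℕ) : ℝ :=
  risingFac a i / risingFac b i * x ^ i / (Nat.factorial i : ℝ)

lemma oneF1_eq_tsum_oneF1Term (a b x : ℝ) : oneF1 a b x = ∑' i, oneF1Term a b x i := rfl

lemma oneF1Term_succ (a : ℝ) {b : ℝ} (hb : 0 < b) (x : ℝ) (i : ℕ) :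
    oneF1Term a b x (i + 1) = oneF1Term a b x i * ((a + i) * x / ((b + i) * (i + 1))) := by
  have := (risingFac_pos hb i).ne'
  have : b + i ≠ 0 := by positivity
  simp only [oneF1Term, risingFac_succ, pow_succ, Nat.factorial_succ, Nat.cast_mul,
    Nat.cast_succ]
  field_simp

lemma oneF1Term_nonneg {a b x : ℝ} (ha : 0 < a) (hb : 0 < b) (hx : 0 ≤ x) (i : ℕ) :
    0 ≤ oneF1Term a b x i := by
  have := risingFac_pos ha i
  have := risingFac_pos hb i
  unfold oneF1Term
  positivity

lemma summable_oneF1Term {a b x : ℝ} (ha : 0 < a) (hb : 0 < b) (hx : 0 ≤ x) :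
    Summable (oneF1Term a b x) := by
  refine summable_of_ratio_norm_eventually_le (r := 1 / 2) (by norm_num) ?_
  filter_upwards [eventually_ge_atTop ⌈a⌉₊, eventually_ge_atTop ⌈4 * x⌉₊] with i hia hix
  have hia : a ≤ i := Nat.ceil_le.mp hia
  have hix : 4 * x ≤ i := Nat.ceil_le.mp hix
  have hratio : (a + i) * x / ((b + i) * (i + 1)) ≤ 1 / 2 := by
    rw [div_le_iff₀ (by positivity)]
    nlinarith [mul_nonneg hx (Nat.cast_nonneg (α := ℝ) i)]
  have hterm := oneF1Term_nonneg ha hb hx i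
  rw [oneF1Term_succ a hb, norm_of_nonneg (by positivity), norm_of_nonneg hterm]
  nlinarith

lemma chiSqPdf_nonneg {ν h : ℝ} (hν : 0 ≤ ν) (hh : 0 ≤ h) : 0 ≤ chiSqPdf ν h := by
  have := Gamma_nonneg_of_nonneg (s := ν / 2) (by positivity)
  unfold chiSqPdf
  positivity

lemma chiSqPdf_add_two_mul {k h : ℝ} (hk : 0 < k) (hh : 0 < h) (i : ℕ) :
    chiSqPdf (k + 2 * i) h = chiSqPdf k h * (h / 2) ^ i / risingFac (k / 2) i := by
  have hk2 : 0 < k / 2 := by positivity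
  have hhalf : (k + 2 * i) / 2 = k / 2 + i := by ring
  have hpow : (k / 2 + i - 1) = (k / 2 - 1) + i := by ring
  have := (risingFac_pos hk2 i).ne'
  have := (Gamma_pos_of_pos hk2).ne'
  simp only [chiSqPdf, hhalf, hpow, Gamma_add_nat_eq_risingFac_mul hk2,
    rpow_add_natCast hh.ne', rpow_add_natCast two_ne_zero, div_pow]
  field_simp

section PoissonGamma

variable {α b : ℝ}

lemma poisson_mul_gammaPdf_eq {l : ℝ} (hl : 0 < l) (i : ℕ) :
    exp (-l / 2) * (l / 2) ^ i / (Nat.factorial i : ℝ) * gammaPdf α b l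
      = b ^ α / (Gamma α * Nat.factorial i * 2 ^ i) *
          (l ^ (α + i - 1) * exp (-((b + 1 / 2) * l))) := by
  have hexp : exp (-((b + 1 / 2) * l)) = exp (-l / 2) * exp (-b * l) := by
    rw [← exp_add]; ring_nf
  rw [add_sub_right_comm, rpow_add_natCast hl.ne', hexp, gammaPdf, div_pow]
  ring

lemma integrableOn_poisson_mul_gammaPdf (hα : 0 < α) (hb : 0 < b) (i : ℕ) :
    IntegrableOn (fun l => exp (-l / 2) * (l / 2) ^ i / (Nat.factorial i : ℝ) * gammaPdf α b l)
      (Ioi 0) := by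
  have hgamma : IntegrableOn (fun l : ℝ => l ^ (α + i - 1) * exp (-((b + 1 / 2) * l))) (Ioi 0) :=
    (integrableOn_rpow_mul_exp_neg_mul_rpow (p := 1) (s := α + i - 1)
      (by linarith [(Nat.cast_nonneg i : (0 : ℝ) ≤ i)]) one_pos
      (by positivity : 0 < b + 1 / 2)).congr_fun (fun l _ => by simp only [rpow_one, neg_mul])
      measurableSet_Ioi
  exact IntegrableOn.congr_fun (hgamma.const_mul _)
    (fun l hl => (poisson_mul_gammaPdf_eq hl i).symm) measurableSet_Ioi

lemma integral_poisson_mul_gammaPdf (hα : 0 < α) (hb : 0 < b) (i : ℕ) :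
    ∫ l in Ioi 0, exp (-l / 2) * (l / 2) ^ i / (Nat.factorial i : ℝ) * gammaPdf α b l
      = risingFac α i / Nat.factorial i * (2 * b / (2 * b + 1)) ^ α * (1 / (2 * b + 1)) ^ i := by
  have hc : 0 < b + 1 / 2 := by linarith
  have := (Gamma_pos_of_pos hα).ne'
  have hp : (2 * b / (2 * b + 1)) ^ α = b ^ α * (1 / (b + 1 / 2)) ^ α := by
    rw [← mul_rpow hb.le (by positivity)]
    congr 1
    field_simp
  have hq : (1 / (2 * b + 1)) ^ i = (1 / (b + 1 / 2)) ^ i / 2 ^ i := by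
    rw [← div_pow]
    congr 1
    field_simp
  rw [setIntegral_congr_fun measurableSet_Ioi (fun l hl => poisson_mul_gammaPdf_eq hl i),
    integral_const_mul, integral_rpow_mul_exp_neg_mul_Ioi (by positivity) hc,
    Gamma_add_nat_eq_risingFac_mul hα, rpow_add_natCast (by positivity), hp, hq]
  field_simp

lemma gammaPdf_nonneg (hα : 0 ≤ α) (hb : 0 ≤ b) {l : ℝ} (hl : 0 ≤ l) : 0 ≤ gammaPdf α b l := by
  have := Gamma_nonneg_of_nonneg hα
  unfold gammaPdf
  positivity

end PoissonGamma

lemma integral_ncChiSqPdf_mul_eq_tsum {k h : ℝ} (hk : 0 ≤ k) (hh : 0 ≤ h) {g : ℝ → ℝ}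
    (hg : ∀ l ∈ Ioi (0 : ℝ), 0 ≤ g l)
    (hint : ∀ i : ℕ, IntegrableOn
      (fun l => exp (-l / 2) * (l / 2) ^ i / (Nat.factorial i : ℝ) * g l) (Ioi 0))
    (hsum : Summable fun i : ℕ => chiSqPdf (k + 2 * i) h *
      ∫ l in Ioi 0, exp (-l / 2) * (l / 2) ^ i / (Nat.factorial i : ℝ) * g l) :
    ∫ l in Ioi 0, ncChiSqPdf k l h * g l
      = ∑' i : ℕ, chiSqPdf (k + 2 * i) h *
          ∫ l in Ioi 0, exp (-l / 2) * (l / 2) ^ i / (Nat.factorial i : ℝ) * g l := by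
  set F : ℕ → ℝ → ℝ := fun i l =>
    chiSqPdf (k + 2 * i) h * (exp (-l / 2) * (l / 2) ^ i / (Nat.factorial i : ℝ) * g l)
  have hF_nonneg : ∀ i, ∀ l ∈ Ioi (0 : ℝ), 0 ≤ F i l := fun i l hl => by
    have := chiSqPdf_nonneg (ν := k + 2 * i) (by positivity) hh
    have := hg l hl
    have : (0 : ℝ) < l := hl
    positivity
  have hF_int : ∀ i, ∫ l in Ioi 0, F i l = chiSqPdf (k + 2 * i) h *
      ∫ l in Ioi 0, exp (-l / 2) * (l / 2) ^ i / (Nat.factorial i : ℝ) * g l :=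
    fun i => integral_const_mul _ _
  have hF_norm : ∀ i, ∫ l in Ioi 0, ‖F i l‖ = ∫ l in Ioi 0, F i l := fun i =>
    setIntegral_congr_fun measurableSet_Ioi fun l hl => norm_of_nonneg (hF_nonneg i l hl)
  have hexpand : ∀ l, ncChiSqPdf k l h * g l = ∑' i, F i l := fun l => by
    rw [ncChiSqPdf, ← tsum_mul_right]
    exact tsum_congr fun i => by ring
  simp_rw [hexpand, ← hF_int]
  exact (integral_tsum_of_summable_integral_norm (fun i => (hint i).const_mul _)
    (hsum.congr fun i => ((hF_norm i).trans (hF_int i)).symm)).symm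

lemma chiSqPdf_mul_integral_poisson_mul_gammaPdf {k τ h α : ℝ} (hk : 0 < k) (hτ : τ ≠ 0)
    (hh : 0 < h) (hα : 0 < α) (i : ℕ) :
    chiSqPdf (k + 2 * i) h * ∫ l in Ioi 0,
        exp (-l / 2) * (l / 2) ^ i / (Nat.factorial i : ℝ) * gammaPdf α (1 / (2 * τ ^ 2)) l
      = chiSqPdf k h * (1 + τ ^ 2) ^ (-α) *
          oneF1Term α (k / 2) (τ ^ 2 * h / (2 * (1 + τ ^ 2))) i := by
  have hp : (2 * (1 / (2 * τ ^ 2)) / (2 * (1 / (2 * τ ^ 2)) + 1)) ^ α = (1 + τ ^ 2) ^ (-α) := by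
    rw [rpow_neg (by positivity), ← inv_rpow (by positivity)]
    congr 1
    field_simp
  have hq : (1 / (2 * (1 / (2 * τ ^ 2)) + 1)) ^ i * (h / 2) ^ i
      = (τ ^ 2 * h / (2 * (1 + τ ^ 2))) ^ i := by
    rw [← mul_pow]
    congr 1
    field_simp
  have := (risingFac_pos (by positivity : 0 < k / 2) i).ne'
  rw [integral_poisson_mul_gammaPdf hα (by positivity), chiSqPdf_add_two_mul hk hh, hp,
    oneF1Term, ← hq]
  field_simp

/-- Theorem 2.5: chi-squared Bayes factor. -/
theorem chi_squared_bayes_factor (k τ r h : ℝ) (hk : 0 < k) (hτ : 0 < τ) (hr : 1 ≤ r)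
    (hh : 0 < h) :
    ∫ l in Set.Ioi (0 : ℝ), ncChiSqPdf k l h * gammaPdf (k / 2 + r) (1 / (2 * τ ^ 2)) l
      = chiSqPdf k h * (1 + τ ^ 2) ^ (-(k / 2 + r)) *
          oneF1 (k / 2 + r) (k / 2) (τ ^ 2 * h / (2 * (1 + τ ^ 2))) := by
  have hα : 0 < k / 2 + r := by positivity
  have hb : 0 < 1 / (2 * τ ^ 2) := by positivity
  have hterm := chiSqPdf_mul_integral_poisson_mul_gammaPdf hk hτ.ne' hh hα
  have hsum := (summable_oneF1Term hα (by positivity : 0 < k / 2)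
    (by positivity : 0 ≤ τ ^ 2 * h / (2 * (1 + τ ^ 2)))).mul_left
    (chiSqPdf k h * (1 + τ ^ 2) ^ (-(k / 2 + r)))
  rw [integral_ncChiSqPdf_mul_eq_tsum hk.le hh.le
      (fun l hl => gammaPdf_nonneg hα.le hb.le (le_of_lt hl))
      (integrableOn_poisson_mul_gammaPdf hα hb) (by simpa only [hterm]),
    tsum_congr hterm, tsum_mul_left, oneF1_eq_tsum_oneF1Term]
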